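/- Let A ∈ ℂ^{n×n} be Schur stable (ρ(A) < 1), B ∈ ℂ^{n×m}, and let w ∈ l₂ with x₀ = 0, x_{k+1} = A x_k + B w_k. Define the gramian V = ∑_{k=0}^∞ [x_k; w_k][x_k; w_k]*. Then [A B] V [A B]* = [I 0] V [I 0]*, i.e., V lies in the cone 𝒞 = {V ⪰ 0 : [A B] V [A B]* = [I 0] V [I 0]*}. -/

import Mathlib

/-!
Since `ρ(A) < 1`, Gelfand's formula makes `‖A ^ k‖` summable. Solving the recursion,
`x (k + 1) = ∑_{i + j = k} A ^ i B w j` is the convolution of an `ℓ¹` sequence with an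
`ℓ²` one, hence `x ∈ ℓ²` and the gramian series converges. Conjugating it term by term, `[A B] V [A B]*`
is the gramian of the shifted state `x (k + 1)` and `[I 0] V [I 0]*` that of `x k`; the two agree
because `x 0 = 0`. A convergent sum of outer products is positive semidefinite.
-/

open Matrix
open scoped ComplexOrder

/-- Outer product `v v*` of a vector. -/
noncomputable def outer {ι : Type*} [Fintype ι] (v : ι → ℂ) : Matrix ι ι ℂ :=
  Matrix.of fun i j => v i * star (v j)

open Finset Filter
open scoped ENNReal

theorem summable_norm_pow_of_spectralRadius_lt_one {A : Type*} [NormedRing A]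
    [NormedAlgebra ℂ A] [CompleteSpace A] {a : A} (ha : spectralRadius ℂ a < 1) :
    Summable fun k => ‖a ^ k‖ := by
  obtain ⟨r, hρr, hr1⟩ := ENNReal.lt_iff_exists_nnreal_btwn.mp ha
  have hroot : ∀ᶠ k : ℕ in atTop, (‖a ^ k‖₊ : ℝ≥0∞) ^ (1 / k : ℝ) < r :=
    (spectrum.pow_nnnorm_pow_one_div_tendsto_nhds_spectralRadius a).eventually_lt_const hρr
  refine .of_norm_bounded_eventually_nat (g := fun k => (r : ℝ) ^ k)
    (summable_geometric_of_lt_one r.coe_nonneg (by exact_mod_cast hr1)) ?_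
  filter_upwards [hroot, eventually_ge_atTop 1] with k hk hk1
  have hk0 : (k : ℝ) ≠ 0 := by positivity
  have hpow : (‖a ^ k‖₊ : ℝ≥0∞) < (r : ℝ≥0∞) ^ k :=
    calc (‖a ^ k‖₊ : ℝ≥0∞) = ((‖a ^ k‖₊ : ℝ≥0∞) ^ (1 / k : ℝ)) ^ k := by
          rw [← ENNReal.rpow_natCast, ← ENNReal.rpow_mul, one_div_mul_cancel hk0,
            ENNReal.rpow_one]
      _ < (r : ℝ≥0∞) ^ k := by gcongr
  rw [← ENNReal.coe_pow, ENNReal.coe_lt_coe, ← NNReal.coe_lt_coe, coe_nnnorm,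
    NNReal.coe_pow] at hpow
  rw [norm_norm]
  exact hpow.le

/-- Young's inequality `ℓ¹ * ℓ² ⊆ ℓ²` for the Cauchy product. -/
theorem summable_sq_sum_antidiagonal_mul {a b : ℕ → ℝ} (ha0 : 0 ≤ a) (ha : Summable a)
    (hb : Summable fun k => b k ^ 2) :
    Summable fun k => (∑ ij ∈ antidiagonal k, a ij.1 * b ij.2) ^ 2 := by
  have hconv : Summable fun k => ∑ ij ∈ antidiagonal k, a ij.1 * b ij.2 ^ 2 :=
    summable_sum_mul_antidiagonal_of_summable_mul (f := a) (g := fun k => b k ^ 2)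
      (ha.mul_of_nonneg hb ha0 fun _ => sq_nonneg _)
  refine .of_nonneg_of_le (fun _ => sq_nonneg _) (fun k => ?_) (hconv.mul_left (∑' i, a i))
  calc (∑ ij ∈ antidiagonal k, a ij.1 * b ij.2) ^ 2
      ≤ (∑ ij ∈ antidiagonal k, a ij.1) * ∑ ij ∈ antidiagonal k, a ij.1 * b ij.2 ^ 2 :=
        sum_sq_le_sum_mul_sum_of_sq_le_mul _ (fun _ _ => ha0 _)
          (fun _ _ => mul_nonneg (ha0 _) (sq_nonneg _)) fun _ _ => le_of_eq (by ring)
    _ ≤ (∑' i, a i) * ∑ ij ∈ antidiagonal k, a ij.1 * b ij.2 ^ 2 := by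
        gcongr
        · exact sum_nonneg fun _ _ => mul_nonneg (ha0 _) (sq_nonneg _)
        · rw [Nat.sum_antidiagonal_eq_sum_range_succ (fun i _ => a i)]
          exact ha.sum_le_tsum _ fun i _ => ha0 i

theorem Matrix.mulVec_recursion_eq_sum_antidiagonal {R n : Type*} [CommSemiring R] [Fintype n]
    [DecidableEq n] (A : Matrix n n R) {u x : ℕ → n → R} (hx0 : x 0 = 0)
    (hx : ∀ k, x (k + 1) = A *ᵥ x k + u k) (k : ℕ) :
    x (k + 1) = ∑ ij ∈ antidiagonal k, (A ^ ij.1) *ᵥ u ij.2 := by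
  induction k with
  | zero => simp [hx, hx0]
  | succ k ih =>
    rw [hx, ih, Nat.sum_antidiagonal_succ, mulVec_sum, add_comm]
    simp [pow_succ', mulVec_mulVec]

theorem EuclideanSpace.norm_toLp_sq {𝕜 ι : Type*} [RCLike 𝕜] [Fintype ι] (v : ι → 𝕜) :
    ‖WithLp.toLp 2 v‖ ^ 2 = ∑ i, ‖v i‖ ^ 2 :=
  EuclideanSpace.norm_sq_eq _

section L2OperatorNorm

open scoped Matrix.Norms.L2Operator

theorem summable_sum_sq_norm_mulVec {ι m n : Type*} [Fintype m] [Fintype n]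
    (B : Matrix m n ℂ) {w : ι → n → ℂ} (hw : Summable fun k => ∑ j, ‖w k j‖ ^ 2) :
    Summable fun k => ∑ i, ‖(B *ᵥ w k) i‖ ^ 2 := by
  classical
  refine .of_nonneg_of_le (fun _ => by positivity) (fun k => ?_) (hw.mul_left (‖B‖ ^ 2))
  rw [← EuclideanSpace.norm_toLp_sq, ← EuclideanSpace.norm_toLp_sq, ← mul_pow]
  exact pow_le_pow_left₀ (norm_nonneg _) (B.l2_opNorm_mulVec (WithLp.toLp 2 (w k))) 2

theorem summable_sum_sq_norm_of_mulVec_recursion {n : Type*} [Fintype n] [DecidableEq n]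
    {A : Matrix n n ℂ} (hA : spectralRadius ℂ A < 1) {u x : ℕ → n → ℂ}
    (hu : Summable fun k => ∑ i, ‖u k i‖ ^ 2) (hx0 : x 0 = 0)
    (hx : ∀ k, x (k + 1) = A *ᵥ x k + u k) :
    Summable fun k => ∑ i, ‖x k i‖ ^ 2 := by
  simp only [← EuclideanSpace.norm_toLp_sq] at hu ⊢
  have hconv := summable_sq_sum_antidiagonal_mul (fun k => norm_nonneg (A ^ k))
    (summable_norm_pow_of_spectralRadius_lt_one hA) hu
  refine (summable_nat_add_iff 1).mp <| hconv.of_nonneg_of_le (fun _ => sq_nonneg _) fun k => ?_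
  refine pow_le_pow_left₀ (norm_nonneg _) ?_ 2
  rw [A.mulVec_recursion_eq_sum_antidiagonal hx0 hx k, WithLp.toLp_sum]
  refine (norm_sum_le _ _).trans (sum_le_sum fun ij _ => ?_)
  exact (A ^ ij.1).l2_opNorm_mulVec (WithLp.toLp 2 (u ij.2))

end L2OperatorNorm

theorem HasSum.matrix_mul_mul {ι l m n p R : Type*} [Fintype m] [Fintype n] [Semiring R]
    [TopologicalSpace R] [IsTopologicalSemiring R] {f : ι → Matrix m n R} {a : Matrix m n R}
    (hf : HasSum f a) (M : Matrix l m R) (N : Matrix n p R) :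
    HasSum (fun k => M * f k * N) (M * a * N) :=
  hf.map ((addMonoidHomMulRight N).comp (addMonoidHomMulLeft M))
    ((continuous_const.matrix_mul continuous_id).matrix_mul continuous_const)

theorem Matrix.PosSemidef.of_hasSum {ι n R : Type*} [Fintype n] [CommRing R] [PartialOrder R]
    [StarRing R] [TopologicalSpace R] [IsTopologicalRing R] [ContinuousStar R] [T2Space R]
    [OrderClosedTopology R] [IsOrderedAddMonoid R] {f : ι → Matrix n n R} {a : Matrix n n R}
    (hf : HasSum f a) (h : ∀ k, (f k).PosSemidef) : a.PosSemidef := by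
  simp only [posSemidef_iff_dotProduct_mulVec] at h ⊢
  refine ⟨?_, fun y => ?_⟩
  · have hstar := hf.matrix_conjTranspose
    simp only [fun k => (h k).1.eq] at hstar
    exact hstar.unique hf
  · let q : Matrix n n R →+ R :=
      { toFun X := star y ⬝ᵥ X *ᵥ y
        map_zero' := by simp
        map_add' X Y := by rw [add_mulVec, dotProduct_add] }
    have hq : Continuous q :=
      continuous_const.dotProduct (continuous_id.matrix_mulVec continuous_const)
    exact (hf.map q hq).nonneg fun k => (h k).2 y

section Outer

variable {ι κ : Type*} [Fintype κ]

theorem outer_eq_vecMulVec (v : κ → ℂ) : outer v = vecMulVec v (star v) := rfl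

theorem posSemidef_outer (v : κ → ℂ) : (outer v).PosSemidef :=
  posSemidef_vecMulVec_self_star v

@[simp]
theorem outer_zero : outer (0 : κ → ℂ) = 0 := by
  simp [outer_eq_vecMulVec]

theorem mul_outer_mul_conjTranspose {m : Type*} [Fintype m] (M : Matrix m κ ℂ) (v : κ → ℂ) :
    M * outer v * Mᴴ = outer (M *ᵥ v) := by
  rw [outer_eq_vecMulVec, outer_eq_vecMulVec, mul_vecMulVec, vecMulVec_mul, star_mulVec]

theorem summable_outer {v : ι → κ → ℂ} (hv : Summable fun k => ∑ i, ‖v k i‖ ^ 2) :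
    Summable fun k => outer (v k) := by
  refine Pi.summable.mpr fun i => Pi.summable.mpr fun j => hv.of_norm_bounded fun k => ?_
  have hle : ∀ l, ‖v k l‖ ^ 2 ≤ ∑ l, ‖v k l‖ ^ 2 := fun l =>
    single_le_sum (f := fun l => ‖v k l‖ ^ 2) (fun _ _ => sq_nonneg _) (mem_univ l)
  rw [outer, of_apply, norm_mul, norm_star]
  nlinarith [hle i, hle j, sq_nonneg (‖v k i‖ - ‖v k j‖)]

end Outer

/-- Any gramian generated by the stable system lies in the cone `𝒞`,
i.e. `[A B] V [A B]ᴴ = [I 0] V [I 0]ᴴ` and `V ⪰ 0`. -/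
theorem gramian_mem_cone {n m : ℕ}
    (A : Matrix (Fin n) (Fin n) ℂ) (B : Matrix (Fin n) (Fin m) ℂ)
    (hA : spectralRadius ℂ A < 1)
    (w : ℕ → Fin m → ℂ) (hw : Summable (fun k => ∑ i, ‖w k i‖ ^ 2))
    (x : ℕ → Fin n → ℂ) (hx0 : x 0 = 0)
    (hx : ∀ k, x (k + 1) = A.mulVec (x k) + B.mulVec (w k))
    (V : Matrix (Fin n ⊕ Fin m) (Fin n ⊕ Fin m) ℂ)
    (hV : V = ∑' k, outer (Sum.elim (x k) (w k))) :
    (fromCols A B) * V * (fromCols A B)ᴴ =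
        (fromCols (1 : Matrix (Fin n) (Fin n) ℂ) (0 : Matrix (Fin n) (Fin m) ℂ)) * V *
          (fromCols (1 : Matrix (Fin n) (Fin n) ℂ) (0 : Matrix (Fin n) (Fin m) ℂ))ᴴ ∧
      V.PosSemidef := by
  have hstate : Summable fun k => ∑ i, ‖x k i‖ ^ 2 :=
    summable_sum_sq_norm_of_mulVec_recursion hA (summable_sum_sq_norm_mulVec B hw) hx0 hx
  have hgram : HasSum (fun k => outer (Sum.elim (x k) (w k))) V := by
    rw [hV]
    refine (summable_outer ?_).hasSum
    simpa only [Fintype.sum_sum_type, Sum.elim_inl, Sum.elim_inr] using hstate.add hw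
  refine ⟨?_, .of_hasSum hgram fun _ => posSemidef_outer _⟩
  have hconj : ∀ M : Matrix (Fin n) (Fin n ⊕ Fin m) ℂ,
      HasSum (fun k => outer (M *ᵥ Sum.elim (x k) (w k))) (M * V * Mᴴ) := fun M => by
    simpa only [mul_outer_mul_conjTranspose] using hgram.matrix_mul_mul M Mᴴ
  have hnext := hconj (fromCols A B)
  have hcur := hconj (fromCols 1 0)
  simp only [fromCols_mulVec_sumElim, ← hx, one_mulVec, zero_mulVec, add_zero] at hnext hcur
  refine hnext.unique ?_
  simpa only [range_one, sum_singleton, hx0, outer_zero, sub_zero] using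
    (hasSum_nat_add_iff' 1).mpr hcur
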